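/- arXiv:2310.02086 — 3 statements merged into one kernel-verified Lean document; each statement's English description precedes it below -/
import Mathlib

section
/- Let B ∈ R^{m×m} be symmetric positive definite and let k_p > 0 and k_v be real numbers with k_v I > B^{-1} (in the Loewner order). Then the block matrix P = [[(k_p + k_v) B², B],[B, B]] is symmetric positive definite. -/
/-!
With respect to the positive definite pivot `B`, the Schur complement of `P` is
`(k_p + k_v) B² - B B⁻¹ B = k_p B² + B (k_v I - B⁻¹) B`, a sum of positive definite matrices.
The Schur complement criterion for semidefiniteness makes `P` positive semidefinite, and `P` is
invertible because `det P = det B · det (Schur complement) ≠ 0`, so it is positive definite.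
-/

open scoped ComplexOrder

namespace Matrix

variable {𝕜 m n : Type*} [RCLike 𝕜] [Fintype m] [Fintype n] [DecidableEq m] [DecidableEq n]

theorem posDef_fromBlocks₂₂_iff (A : Matrix m m 𝕜) (B : Matrix m n 𝕜) {D : Matrix n n 𝕜}
    (hD : D.PosDef) : (fromBlocks A B Bᴴ D).PosDef ↔ (A - B * D⁻¹ * Bᴴ).PosDef := by
  have := hD.isUnit.invertible
  by_cases hS : (A - B * D⁻¹ * Bᴴ).PosSemidef
  · have hP := (PosDef.fromBlocks₂₂ A B hD).mpr hS
    rw [hP.posDef_iff_det_ne_zero, hS.posDef_iff_det_ne_zero, det_fromBlocks₂₂,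
      invOf_eq_nonsing_inv]
    simp [hD.det_pos.ne']
  · exact iff_of_false (fun h => hS ((PosDef.fromBlocks₂₂ A B hD).mp h.posSemidef))
      (fun h => hS h.posSemidef)

theorem PosDef.smul_mul_self_sub_mul_inv_mul {B : Matrix n n ℝ} (hB : B.PosDef) {kp kv : ℝ}
    (hkp : 0 < kp) (hkv : (kv • (1 : Matrix n n ℝ) - B⁻¹).PosDef) :
    ((kp + kv) • (B * B) - B * B⁻¹ * B).PosDef := by
  have hinj := mulVec_injective_of_isUnit hB.isUnit
  have split : (kp + kv) • (B * B) - B * B⁻¹ * B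
      = kp • (Bᴴ * B) + Bᴴ * (kv • 1 - B⁻¹) * B := by
    rw [hB.1, Matrix.mul_sub, Matrix.sub_mul, Matrix.mul_smul, Matrix.mul_one, Matrix.smul_mul,
      add_smul]
    abel
  rw [split]
  exact ((PosDef.conjTranspose_mul_self B hinj).smul hkp).add (hkv.conjTranspose_mul_mul_same hinj)

end Matrix

/-- If `B` is symmetric positive definite, `k_p > 0` and
`k_v I > B⁻¹` in the Loewner order (i.e. `k_v I - B⁻¹` is positive definite),
then the block matrix `P = [[(k_p + k_v) B², B],[B, B]]` is positive definite. -/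
theorem stmt2 {m : ℕ} (B : Matrix (Fin m) (Fin m) ℝ) (hB : B.PosDef)
    (kp kv : ℝ) (hkp : 0 < kp)
    (hkv : (kv • (1 : Matrix (Fin m) (Fin m) ℝ) - B⁻¹).PosDef) :
    (Matrix.fromBlocks ((kp + kv) • (B * B)) B B B).PosDef := by
  have hP := (Matrix.posDef_fromBlocks₂₂_iff ((kp + kv) • (B * B)) B hB).mpr
  rw [hB.1] at hP
  exact hP (hB.smul_mul_self_sub_mul_inv_mul hkp hkv)
end

section
/- Let ρ̂, ρ : [0,∞) → R be differentiable with ρ(t) > 0, and suppose the estimation error ρ̃ = ρ̂ - ρ satisfies ρ̃̇(t) = -k |ω(t)| ρ̃(t) for a continuous function ω and constant k > 0. If there exist ε > 0 and σ > 0 such that ∫_t^{t+σ} |ω(τ)| dτ > ε for all t ≥ 0 (persistent excitation), then ρ̃(t) → 0 as t → ∞; moreover |ρ̃(t)| ≤ |ρ̃(0)| for all t ≥ 0. -/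
open intervalIntegral

/-- If the estimation error `ρ̃ = ρ̂ - ρ` satisfies
`ρ̃̇ = -k |ω| ρ̃` with `k > 0`, `ω` continuous, `ρ > 0`, and `ω` is persistently
exciting (`∫_t^{t+σ} |ω| > ε` for all `t ≥ 0`), then `ρ̃(t) → 0` as `t → ∞` and
`|ρ̃(t)| ≤ |ρ̃(0)|` for all `t ≥ 0`. -/
theorem stmt13 (ρhat ρ : ℝ → ℝ) (ω : ℝ → ℝ) (k : ℝ) (hk : 0 < k)
    (hω : Continuous ω) (hρpos : ∀ t, 0 ≤ t → 0 < ρ t)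
    (hode : ∀ t, 0 ≤ t →
      HasDerivAt (fun s => ρhat s - ρ s) (-k * |ω t| * (ρhat t - ρ t)) t)
    (ε σ : ℝ) (hε : 0 < ε) (hσ : 0 < σ)
    (hPE : ∀ t, 0 ≤ t → ε < ∫ τ in t..t + σ, |ω τ|) :
    Filter.Tendsto (fun t => ρhat t - ρ t) Filter.atTop (nhds 0) ∧
      ∀ t, 0 ≤ t → |ρhat t - ρ t| ≤ |ρhat 0 - ρ 0| := by
  set f : ℝ → ℝ := fun s => ρhat s - ρ s with hf
  set I : ℝ → ℝ := fun t => ∫ τ in (0:ℝ)..t, |ω τ| with hI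
  have hIderiv : ∀ t, HasDerivAt I (|ω t|) t := fun t =>
    ((hω.abs).integral_hasStrictDerivAt 0 t).hasDerivAt
  -- additivity / monotonicity of I
  have hIadd : ∀ a b : ℝ, I b = I a + ∫ τ in a..b, |ω τ| := by
    intro a b
    rw [hI]
    have := intervalIntegral.integral_add_adjacent_intervals
      ((hω.abs).intervalIntegrable (μ := MeasureTheory.volume) 0 a) ((hω.abs).intervalIntegrable a b)
    simp only at this ⊢
    linarith
  have hImono : Monotone I := by
    intro a b hab
    have h := hIadd a b
    have hnn : 0 ≤ ∫ τ in a..b, |ω τ| :=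
      intervalIntegral.integral_nonneg hab (fun x _ => abs_nonneg _)
    linarith
  have hI0 : I 0 = 0 := intervalIntegral.integral_same
  -- g = f * exp(k I) is constant on [0,∞)
  set g : ℝ → ℝ := fun t => f t * Real.exp (k * I t) with hg
  have hgderiv : ∀ t ∈ Set.Ici (0:ℝ), HasDerivWithinAt g 0 (Set.Ici 0) t := by
    intro t ht
    have h1 : HasDerivAt (fun s => Real.exp (k * I s))
        (Real.exp (k * I t) * (k * |ω t|)) t := ((hIderiv t).const_mul k).exp
    have h2 : HasDerivAt g
        (-k * |ω t| * f t * Real.exp (k * I t)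
          + f t * (Real.exp (k * I t) * (k * |ω t|))) t :=
      (hode t ht).mul h1
    have : (-k * |ω t| * f t * Real.exp (k * I t)
          + f t * (Real.exp (k * I t) * (k * |ω t|))) = 0 := by ring
    rw [this] at h2
    exact h2.hasDerivWithinAt
  have hgconst : ∀ t, 0 ≤ t → g t = g 0 := by
    intro t ht
    have := (convex_Ici (0:ℝ)).norm_image_sub_le_of_norm_hasDerivWithin_le
      (C := 0) (fun x hx => (hgderiv x hx)) (fun x _ => by simp)
      (Set.self_mem_Ici) ht
    simp only [zero_mul] at this
    have : ‖g t - g 0‖ ≤ 0 := by simpa using this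
    have := norm_le_zero_iff.mp this
    linarith [sub_eq_zero.mp this]
  have hsol : ∀ t, 0 ≤ t → f t = f 0 * Real.exp (-(k * I t)) := by
    intro t ht
    have h1 : f t * Real.exp (k * I t) = f 0 := by
      have := hgconst t ht
      simpa [hg, hI0] using this
    rw [Real.exp_neg, ← h1]
    field_simp
  -- I(nσ) ≥ nε
  have hIn : ∀ n : ℕ, (n : ℝ) * ε ≤ I (n * σ) := by
    intro n
    induction n with
    | zero => simp [hI0]
    | succ n ih =>
      have hnσ : (0:ℝ) ≤ n * σ := by positivity
      have hpe := hPE (n * σ) hnσ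
      have hadd := hIadd (n * σ) (n * σ + σ)
      have : ((n : ℝ) + 1) * σ = n * σ + σ := by ring
      push_cast
      rw [this]
      nlinarith
  have hItop : Filter.Tendsto I Filter.atTop Filter.atTop := by
    rw [Filter.tendsto_atTop]
    intro b
    obtain ⟨n, hn⟩ := exists_nat_ge (b / ε)
    have hb : b ≤ (n : ℝ) * ε := by
      rw [div_le_iff₀ hε] at hn; linarith
    filter_upwards [Filter.eventually_ge_atTop ((n : ℝ) * σ)] with t ht
    exact hb.trans ((hIn n).trans (hImono ht))
  constructor
  · have hexp : Filter.Tendsto (fun t => Real.exp (-(k * I t)))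
        Filter.atTop (nhds 0) := by
      apply Real.tendsto_exp_atBot.comp
      exact Filter.tendsto_neg_atBot_iff.mpr (hItop.const_mul_atTop hk)
    have := hexp.const_mul (f 0)
    rw [mul_zero] at this
    apply this.congr'
    filter_upwards [Filter.eventually_ge_atTop (0:ℝ)] with t ht
    exact (hsol t ht).symm
  · intro t ht
    have h := hsol t ht
    have hIt : 0 ≤ I t := by rw [← hI0]; exact hImono ht
    have hle : Real.exp (-(k * I t)) ≤ 1 :=
      Real.exp_le_one_iff.mpr (by nlinarith)
    calc |f t| = |f 0| * Real.exp (-(k * I t)) := by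
          rw [h, abs_mul, abs_of_pos (Real.exp_pos _)]
      _ ≤ |f 0| * 1 := by
          exact mul_le_mul_of_nonneg_left hle (abs_nonneg _)
      _ = |f 0| := mul_one _
end

section
/- Let L be a symmetric positive semi-definite n×n stress matrix partitioned as [[L_ll, L_lf],[L_fl, L_ff]] with L_ff positive definite, satisfying (L ⊗ I_d) r = 0. Suppose leader trajectories satisfy p_l(t) = (I ⊗ A(t)) r_l + 1_{n_l} ⊗ b(t) and define p_f*(t) = -(L_ff ⊗ I_d)^{-1}(L_fl ⊗ I_d) p_l(t). Then p_f*(t) = (I ⊗ A(t)) r_f + 1_{n_f} ⊗ b(t), i.e., the stress-matrix formula reproduces the affine image of the follower configuration. -/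
/-! With `M = -L_ff⁻¹ L_fl`, the follower rows of `(L ⊗ I_d) r = 0` give `M r_l = r_f` and the
follower rows of `L 1 = 0` give `M 1 = 1`. So each row of `M` takes an affine combination of the
leader points, and affine combinations commute with the affine map `x ↦ A x + b`. -/

open Matrix

namespace Matrix

variable {l m n p R : Type*}

theorem mul_apply_eq_mulVec_add_of_mulVec_one [Fintype l] [Fintype n] [CommSemiring R]
    {M : Matrix m n R} (hM : M *ᵥ 1 = 1) {P : Matrix n p R} {Q : Matrix n l R} {A : Matrix p l R} {b : p → R}
    (hP : ∀ k, P k = A *ᵥ Q k + b) (i : m) :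
    (M * P) i = A *ᵥ (M * Q) i + b := by
  have hsum : ∑ k, M i k = 1 := by simpa [mulVec, dotProduct] using congrFun hM i
  simp only [mul_apply_eq_vecMul, vecMul_eq_sum, hP, smul_add, Finset.sum_add_distrib,
    ← Finset.sum_smul, hsum, one_smul, mulVec_sum, mulVec_smul]

variable [Fintype n] [DecidableEq n] [CommRing R]

theorem neg_inv_mul_mul_eq_of_mul_add_mul_eq_zero [Fintype m] {C : Matrix n m R}
    {D : Matrix n n R} (hD : IsUnit D.det) {X : Matrix m p R} {Y : Matrix n p R} (h : C * X + D * Y = 0) :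
    -(D⁻¹ * C) * X = Y := by
  rw [Matrix.neg_mul, Matrix.mul_assoc, eq_neg_of_add_eq_zero_left h, Matrix.mul_neg, neg_neg,
    nonsing_inv_mul_cancel_left _ _ hD]

theorem neg_inv_mul_mulVec_eq_of_mulVec_add_mulVec_eq_zero [Fintype m] {C : Matrix n m R}
    {D : Matrix n n R} (hD : IsUnit D.det) {x : m → R} {y : n → R} (h : C *ᵥ x + D *ᵥ y = 0) :
    -(D⁻¹ * C) *ᵥ x = y := by
  rw [neg_mulVec, ← mulVec_mulVec, eq_neg_of_add_eq_zero_left h, mulVec_neg, neg_neg,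
    mulVec_mulVec, nonsing_inv_mul _ hD, one_mulVec]

end Matrix

theorem stmt19_general {nl nf d : ℕ}
    (Lll : Matrix (Fin nl) (Fin nl) ℝ) (Llf : Matrix (Fin nl) (Fin nf) ℝ)
    (Lfl : Matrix (Fin nf) (Fin nl) ℝ) (Lff : Matrix (Fin nf) (Fin nf) ℝ)
    (hff : Lff.PosDef)
    (hrow : (Matrix.fromBlocks Lll Llf Lfl Lff) *ᵥ (fun _ => (1 : ℝ)) = 0)
    (Rl : Matrix (Fin nl) (Fin d) ℝ) (Rf : Matrix (Fin nf) (Fin d) ℝ)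
    (hker : Matrix.fromBlocks Lll Llf Lfl Lff * Matrix.fromRows Rl Rf = 0)
    (A : Matrix (Fin d) (Fin d) ℝ) (b : Fin d → ℝ)
    (Pl : Matrix (Fin nl) (Fin d) ℝ)
    (hPl : ∀ i, Pl i = A.mulVec (Rl i) + b) :
    ∀ i, (-(Lff⁻¹ * Lfl * Pl)) i = A.mulVec (Rf i) + b := by
  have hdet : IsUnit Lff.det := hff.isUnit.map detMonoidHom
  have hker_f : Lfl * Rl + Lff * Rf = 0 := by
    rw [fromBlocks_mul_fromRows, ← fromRows_zero] at hker
    exact (fromRows_inj hker).2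
  have hrow_f : Lfl *ᵥ 1 + Lff *ᵥ 1 = 0 := by
    have := congrArg (· ∘ Sum.inr) hrow
    rwa [fromBlocks_mulVec, Sum.elim_comp_inr] at this
  intro i
  rw [← Matrix.neg_mul, mul_apply_eq_mulVec_add_of_mulVec_one
      (neg_inv_mul_mulVec_eq_of_mulVec_add_mulVec_eq_zero hdet hrow_f) hPl,
    neg_inv_mul_mul_eq_of_mul_add_mul_eq_zero hdet hker_f]

/-- Let the positive semidefinite symmetric stress matrix
`L = [[Lll, Llf],[Lfl, Lff]]` have `Lff` positive definite, zero row sums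
(`L 1_n = 0`), and satisfy `(L ⊗ I_d) r = 0` (encoded blockwise as
`L * [Rl; Rf] = 0` with the rows of `Rl, Rf` the configuration points).
If each leader position is the affine image `p_i = A r_i + b` (rows of `Pl`)
and `Pf* := -(Lff⁻¹ Lfl) Pl`, then each row of `Pf*` is `A r_i + b` for the
corresponding follower configuration point, i.e. the stress-matrix formula
reproduces the affine image of the follower configuration. -/
theorem stmt19 {nl nf d : ℕ}
    (Lll : Matrix (Fin nl) (Fin nl) ℝ) (Llf : Matrix (Fin nl) (Fin nf) ℝ)
    (Lfl : Matrix (Fin nf) (Fin nl) ℝ) (Lff : Matrix (Fin nf) (Fin nf) ℝ)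
    (hpsd : (Matrix.fromBlocks Lll Llf Lfl Lff).PosSemidef)
    (hff : Lff.PosDef)
    (hrow : (Matrix.fromBlocks Lll Llf Lfl Lff) *ᵥ (fun _ => (1 : ℝ)) = 0)
    (Rl : Matrix (Fin nl) (Fin d) ℝ) (Rf : Matrix (Fin nf) (Fin d) ℝ)
    (hker : Matrix.fromBlocks Lll Llf Lfl Lff * Matrix.fromRows Rl Rf = 0)
    (A : Matrix (Fin d) (Fin d) ℝ) (b : Fin d → ℝ)
    (Pl : Matrix (Fin nl) (Fin d) ℝ)
    (hPl : ∀ i, Pl i = A.mulVec (Rl i) + b) :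
    ∀ i, (-(Lff⁻¹ * Lfl * Pl)) i = A.mulVec (Rf i) + b :=
  stmt19_general Lll Llf Lfl Lff hff hrow Rl Rf hker A b Pl hPl
end
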